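/- arXiv:2512.15522 — 2 statements merged into one kernel-verified Lean document; each statement's English description precedes it below -/
import Mathlib

section
/- Let K ⊂ L be a finite Galois extension of differential fields (each element σ of the Galois group G commutes with the derivations), and let ω be a 1-form over K. Suppose there exists a closed 1-form α over L with dω = α ∧ ω. Then the averaged 1-form α̃ = (1/|G|)·∑_{σ ∈ G} σ(α) has coefficients in K, is closed, and satisfies dω = α̃ ∧ ω. -/
/-!
Averaging over the Galois group `G` lands in the fixed field `K`, commutes with the derivations
and is linear over `G`-fixed coefficients. Applying it to `dα = 0` and to `dω = α ∧ ω`, whose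
left-hand side and `ω` are `G`-fixed, gives both identities for `α̃`.
-/

section GaloisAverage

variable (K : Type*) {L : Type*} [Field K] [Field L] [Algebra K L] [FiniteDimensional K L]

noncomputable def galoisAverage (x : L) : L :=
  (Fintype.card (L ≃ₐ[K] L) : L)⁻¹ * ∑ σ : L ≃ₐ[K] L, σ x

variable {K}

theorem map_galoisAverage (τ : L ≃ₐ[K] L) (x : L) : τ (galoisAverage K x) = galoisAverage K x := by
  rw [galoisAverage, map_mul, map_inv₀, map_natCast, map_sum]
  congr 1
  exact Fintype.sum_equiv (Equiv.mulLeft τ) _ _ fun _ => rfl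

theorem galoisAverage_mem_range [IsGalois K L] (x : L) :
    galoisAverage K x ∈ (algebraMap K L).range :=
  (IsGalois.mem_range_algebraMap_iff_fixed _).mpr fun τ => map_galoisAverage τ x

theorem galoisAverage_eq_self [CharZero L] {x : L} (hx : ∀ σ : L ≃ₐ[K] L, σ x = x) :
    galoisAverage K x = x := by
  have hcard : (Fintype.card (L ≃ₐ[K] L) : L) ≠ 0 := Nat.cast_ne_zero.mpr Fintype.card_ne_zero
  simp only [galoisAverage, hx, Finset.sum_const, Finset.card_univ, nsmul_eq_mul]
  field_simp

theorem galoisAverage_sub (x y : L) :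
    galoisAverage K (x - y) = galoisAverage K x - galoisAverage K y := by
  simp only [galoisAverage, map_sub, Finset.sum_sub_distrib, mul_sub]

theorem galoisAverage_mul_of_fixed (x : L) {y : L} (hy : ∀ σ : L ≃ₐ[K] L, σ y = y) :
    galoisAverage K (x * y) = galoisAverage K x * y := by
  simp only [galoisAverage, map_mul, hy, ← Finset.sum_mul, mul_assoc]

theorem derivation_galoisAverage {R : Type*} [CommRing R] [Algebra R L] (D : Derivation R L L)
    (hD : ∀ (σ : L ≃ₐ[K] L) (x : L), σ (D x) = D (σ x)) (x : L) :
    D (galoisAverage K x) = galoisAverage K (D x) := by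
  have hDcard : D (Fintype.card (L ≃ₐ[K] L) : L)⁻¹ = 0 := by
    rw [Derivation.leibniz_inv, D.map_natCast, smul_zero]
  simp only [galoisAverage, Derivation.leibniz, hDcard, map_sum, hD, smul_eq_mul, mul_zero,
    add_zero]

end GaloisAverage

/-- let `L/K` be a finite Galois extension of differential fields
(of characteristic zero) whose Galois group commutes with the derivations, and
let `ω` be a 1-form over `K`. If some closed 1-form `α` over `L` satisfies
`dω = α ∧ ω`, then the Galois average `α̃ = (1/|G|) ∑_σ σ(α)` has coefficients
in `K`, is closed, and satisfies `dω = α̃ ∧ ω`. -/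
theorem galois_average_cofactor
    (K L : Type*) [Field K] [Field L] [Algebra K L] [CharZero K]
    [FiniteDimensional K L] [IsGalois K L]
    (n : ℕ) (D : Fin n → Derivation ℤ L L)
    (hσD : ∀ (σ : L ≃ₐ[K] L) (i : Fin n) (x : L), σ (D i x) = D i (σ x))
    (ω : Fin n → L)
    (hωK : ∀ i, ω i ∈ (algebraMap K L).range)
    (α : Fin n → L)
    (hdα : ∀ i j, D i (α j) = D j (α i))
    (hdω : ∀ i j, D i (ω j) - D j (ω i) = α i * ω j - α j * ω i) :
    ∀ αt : Fin n → L,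
      (αt = fun i => (Fintype.card (L ≃ₐ[K] L) : L)⁻¹ *
          ∑ σ : L ≃ₐ[K] L, σ (α i)) →
      (∀ i, αt i ∈ (algebraMap K L).range) ∧
      (∀ i j, D i (αt j) = D j (αt i)) ∧
      (∀ i j, D i (ω j) - D j (ω i) = αt i * ω j - αt j * ω i) := by
  rintro αt rfl
  have : CharZero L := charZero_of_injective_algebraMap (algebraMap K L).injective
  have hω : ∀ (σ : L ≃ₐ[K] L) i, σ (ω i) = ω i := fun σ i =>
    (IsGalois.mem_range_algebraMap_iff_fixed _).mp (hωK i) σ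
  have hdω_fixed : ∀ (σ : L ≃ₐ[K] L) i j, σ (D i (ω j) - D j (ω i)) = D i (ω j) - D j (ω i) := by
    intro σ i j
    rw [map_sub, hσD, hσD, hω, hω]
  refine ⟨fun i => galoisAverage_mem_range (α i), fun i j => ?_, fun i j => ?_⟩
  · change D i (galoisAverage K (α j)) = D j (galoisAverage K (α i))
    rw [derivation_galoisAverage _ (hσD · i), derivation_galoisAverage _ (hσD · j), hdα]
  · change _ = galoisAverage K (α i) * ω j - galoisAverage K (α j) * ω i
    rw [← galoisAverage_mul_of_fixed _ (hω · j), ← galoisAverage_mul_of_fixed _ (hω · i),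
      ← galoisAverage_sub, ← hdω, galoisAverage_eq_self (hdω_fixed · i j)]
end

section
/- Let K ⊂ L be a finite Galois extension of differential fields with group G commuting with the derivations, and let Ω be an (n−1)-form over K with n = 3 (a 2-form in three variables). Suppose there exist 1-forms ω, α over L with ω ≠ 0, ω ∧ Ω = 0, dω = α ∧ ω, dα = 0, and suppose some τ ∈ G satisfies τ(ω) ∧ ω ≠ 0. Then there exists a closed 1-form β over K with dΩ = β ∧ Ω. -/
lemma fixed_mem_range' (K L : Type*) [Field K] [Field L] [Algebra K L]
    [FiniteDimensional K L] [IsGalois K L] (x : L)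
    (h : ∀ σ : L ≃ₐ[K] L, σ x = x) : x ∈ (algebraMap K L).range := by
  have h1 : IntermediateField.fixingSubgroup (⊥ : IntermediateField K L) = ⊤ := by
    ext σ
    simp only [Subgroup.mem_top, iff_true]
    rintro ⟨y, hy⟩
    obtain ⟨k, rfl⟩ := IntermediateField.mem_bot.mp hy
    exact σ.commutes k
  have h2 := IsGalois.fixedField_fixingSubgroup (⊥ : IntermediateField K L)
  rw [h1] at h2
  have hx : x ∈ IntermediateField.fixedField (⊤ : Subgroup (L ≃ₐ[K] L)) := by
    intro σ; exact h σ
  rw [h2] at hx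
  obtain ⟨k, hk⟩ := IntermediateField.mem_bot.mp hx
  exact ⟨k, hk⟩


/-- let `L/K` be a finite Galois extension of differential
fields (characteristic zero, Galois group commuting with the three derivations)
and let `Ω = P dy∧dz + Q dz∧dx + R dx∧dy` be a 2-form with coefficients
`Ω i ∈ K` (three variables, `n = 3`).  Suppose there are 1-forms `ω, α` over
`L` with `ω ≠ 0`, `ω ∧ Ω = 0` (i.e. `∑ ωᵢ Ωᵢ = 0`), `dω = α ∧ ω`, `dα = 0`,
and some `τ ∈ G` with `τ(ω) ∧ ω ≠ 0`.  Then there is a closed 1-form `β` over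
`K` with `dΩ = β ∧ Ω`, i.e. `∑ ∂ᵢ Ωᵢ = ∑ βᵢ Ωᵢ`. -/
theorem two_integrals_give_darboux_jacobi_multiplier
    (K L : Type*) [Field K] [Field L] [Algebra K L] [CharZero K]
    [FiniteDimensional K L] [IsGalois K L]
    (D : Fin 3 → Derivation ℤ L L)
    (hcomm : ∀ i j (x : L), D i (D j x) = D j (D i x))
    (hσD : ∀ (σ : L ≃ₐ[K] L) (i : Fin 3) (x : L), σ (D i x) = D i (σ x))
    (Ω : Fin 3 → L) (hΩK : ∀ i, Ω i ∈ (algebraMap K L).range)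
    (ω α : Fin 3 → L)
    (hω : ω ≠ 0)
    (hωΩ : ∑ i, ω i * Ω i = 0)
    (hdω : ∀ i j, D i (ω j) - D j (ω i) = α i * ω j - α j * ω i)
    (hdα : ∀ i j, D i (α j) = D j (α i))
    (τ : L ≃ₐ[K] L)
    (hτω : ∃ i j, τ (ω i) * ω j - τ (ω j) * ω i ≠ 0) :
    ∃ β : Fin 3 → L,
      (∀ i, β i ∈ (algebraMap K L).range) ∧
      (∀ i j, D i (β j) = D j (β i)) ∧
      (∑ i, D i (Ω i)) = ∑ i, β i * Ω i := by
  -- every σ fixes Ω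
  have hσΩ : ∀ (σ : L ≃ₐ[K] L) i, σ (Ω i) = Ω i := by
    intro σ i
    obtain ⟨k, hk⟩ := hΩK i
    rw [← hk]; exact σ.commutes k
  by_cases hΩ0 : Ω = 0
  · refine ⟨0, by simp, by simp, by simp [hΩ0]⟩
  set a : Fin 3 → L := fun i => τ (ω i) with ha
  set aα : Fin 3 → L := fun i => τ (α i) with haα
  have hSτ : a 0 * Ω 0 + a 1 * Ω 1 + a 2 * Ω 2 = 0 := by
    have := congrArg τ hωΩ
    simp only [Fin.sum_univ_three, map_add, map_mul, map_zero, hσΩ τ] at this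
    simpa [ha] using this
  have hS : ω 0 * Ω 0 + ω 1 * Ω 1 + ω 2 * Ω 2 = 0 := by
    simpa [Fin.sum_univ_three] using hωΩ
  have hdωτ : ∀ i j, D i (a j) - D j (a i) = aα i * a j - aα j * a i := by
    intro i j
    have := congrArg τ (hdω i j)
    simpa only [map_sub, map_mul, hσD τ] using this
  have hdατ : ∀ i j, D i (aα j) = D j (aα i) := by
    intro i j
    have := congrArg τ (hdα i j)
    simpa only [hσD τ] using this
  -- the cross product c = τ(ω) × ω
  set c : Fin 3 → L := ![a 1 * ω 2 - a 2 * ω 1, a 2 * ω 0 - a 0 * ω 2,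
    a 0 * ω 1 - a 1 * ω 0] with hc
  have hc0 : c 0 = a 1 * ω 2 - a 2 * ω 1 := by simp [hc]
  have hc1 : c 1 = a 2 * ω 0 - a 0 * ω 2 := by simp [hc]
  have hc2 : c 2 = a 0 * ω 1 - a 1 * ω 0 := by simp [hc]
  -- some component of c is nonzero
  obtain ⟨k, hk⟩ : ∃ k, c k ≠ 0 := by
    obtain ⟨i, j, hne⟩ := hτω
    have hne' : a i * ω j - a j * ω i ≠ 0 := hne
    clear hne
    fin_cases i <;> fin_cases j <;>
      simp only [Fin.isValue, Fin.reduceFinMk] at hne' ⊢ <;>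
      [ (exfalso; apply hne'; ring);
        (refine ⟨2, ?_⟩; intro h; rw [hc2] at h; apply hne'; linear_combination h);
        (refine ⟨1, ?_⟩; intro h; rw [hc1] at h; apply hne'; linear_combination -h);
        (refine ⟨2, ?_⟩; intro h; rw [hc2] at h; apply hne'; linear_combination -h);
        (exfalso; apply hne'; ring);
        (refine ⟨0, ?_⟩; intro h; rw [hc0] at h; apply hne'; linear_combination h);
        (refine ⟨1, ?_⟩; intro h; rw [hc1] at h; apply hne'; linear_combination h);
        (refine ⟨0, ?_⟩; intro h; rw [hc0] at h; apply hne'; linear_combination -h);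
        (exfalso; apply hne'; ring)]
  -- Ω is proportional to c
  have hprop : ∀ i j, Ω i * c j = Ω j * c i := by
    intro i j
    fin_cases i <;> fin_cases j <;>
      simp only [Fin.isValue, Fin.reduceFinMk, hc0, hc1, hc2] <;>
      [ linear_combination (a 2) * hS - (ω 2) * hSτ;
        linear_combination (ω 1) * hSτ - (a 1) * hS;
        linear_combination (ω 2) * hSτ - (a 2) * hS;
        linear_combination (a 0) * hS - (ω 0) * hSτ;
        linear_combination (a 1) * hS - (ω 1) * hSτ;
        linear_combination (ω 0) * hSτ - (a 0) * hS]
  obtain ⟨ℓ, hℓ, hΩc⟩ : ∃ ℓ : L, ℓ ≠ 0 ∧ ∀ j, Ω j = ℓ * c j := by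
    refine ⟨Ω k / c k, ?_, ?_⟩
    · intro h
      rw [div_eq_zero_iff] at h
      rcases h with h | h
      · apply hΩ0
        funext j
        have hj := hprop j k
        rw [h, zero_mul] at hj
        rcases mul_eq_zero.mp hj with h' | h'
        · exact h'
        · exact absurd h' hk
      · exact hk h
    · intro j
      rw [div_mul_eq_mul_div, eq_div_iff hk, ← hprop j k]
  -- divergence of c
  have hdivc : D 0 (c 0) + D 1 (c 1) + D 2 (c 2)
      = (α 0 + aα 0) * c 0 + (α 1 + aα 1) * c 1 + (α 2 + aα 2) * c 2 := by
    simp only [hc0, hc1, hc2, map_sub, Derivation.leibniz, smul_eq_mul]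
    linear_combination (ω 0) * hdωτ 1 2 + (ω 1) * hdωτ 2 0 + (ω 2) * hdωτ 0 1
      - (a 0) * hdω 1 2 - (a 1) * hdω 2 0 - (a 2) * hdω 0 1
  -- the 1-form γ over L
  set γ : Fin 3 → L := fun i => α i + aα i + D i ℓ / ℓ with hγ
  have hdγ : ∀ i j, D i (γ j) = D j (γ i) := by
    intro i j
    simp only [hγ, map_add, Derivation.leibniz_div, smul_eq_mul, hdα i j, hdατ i j,
      hcomm i j ℓ]
    ring
  have hγΩ : ∑ i, γ i * Ω i = ∑ i, D i (Ω i) := by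
    simp only [Fin.sum_univ_three, hγ]
    rw [hΩc 0, hΩc 1, hΩc 2]
    simp only [Derivation.leibniz, smul_eq_mul]
    field_simp
    first
      | linear_combination ℓ * hdivc
      | linear_combination ℓ^2 * hdivc
      | linear_combination -ℓ * hdivc
      | linear_combination -(ℓ^2) * hdivc
  -- Galois averaging
  haveI : CharZero L := charZero_of_injective_algebraMap (algebraMap K L).injective
  set n : L := (Fintype.card (L ≃ₐ[K] L) : L) with hn
  have hn0 : n ≠ 0 := Nat.cast_ne_zero.mpr Fintype.card_ne_zero
  set β : Fin 3 → L := fun j => n⁻¹ * ∑ σ : L ≃ₐ[K] L, σ (γ j) with hβ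
  have hβfix : ∀ (σ₀ : L ≃ₐ[K] L) j, σ₀ (β j) = β j := by
    intro σ₀ j
    simp only [hβ, map_mul, map_inv₀, map_sum, hn, map_natCast]
    congr 1
    exact Fintype.sum_equiv (Equiv.mulLeft σ₀) _ _ (fun σ => rfl)
  have hDn : ∀ i, D i n⁻¹ = 0 := by
    intro i
    rw [Derivation.leibniz_inv, hn, Derivation.map_natCast, smul_zero]
  refine ⟨β, ?_, ?_, ?_⟩
  · intro j
    exact fixed_mem_range' K L (β j) (fun σ => hβfix σ j)
  · intro i j
    have e : ∀ (m : Fin 3) (p : Fin 3), D m (β p) = n⁻¹ * ∑ σ : L ≃ₐ[K] L, σ (D m (γ p)) := by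
      intro m p
      rw [hβ]
      simp only [Derivation.leibniz, smul_eq_mul, hDn m, mul_zero, add_zero, map_sum]
      congr 1
      exact Finset.sum_congr rfl (fun σ _ => (hσD σ m (γ p)).symm)
    rw [e i j, e j i]
    congr 1
    exact Finset.sum_congr rfl (fun σ _ => by rw [hdγ i j])
  · have expand : ∀ σ : L ≃ₐ[K] L, σ (∑ i, γ i * Ω i) = ∑ i, σ (γ i) * Ω i := by
      intro σ
      rw [map_sum]
      exact Finset.sum_congr rfl (fun i _ => by rw [map_mul, hσΩ])
    have step : ∑ i, β i * Ω i = n⁻¹ * ∑ σ : L ≃ₐ[K] L, σ (∑ i, γ i * Ω i) := by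
      rw [Finset.sum_congr rfl (fun σ (_ : σ ∈ Finset.univ) => expand σ), Finset.sum_comm,
        Finset.mul_sum]
      refine Finset.sum_congr rfl (fun i _ => ?_)
      rw [hβ, ← Finset.sum_mul, mul_assoc]
    rw [step, hγΩ]
    have hfixdiv : ∀ σ : L ≃ₐ[K] L, σ (∑ i, D i (Ω i)) = ∑ i, D i (Ω i) := by
      intro σ
      rw [map_sum]
      exact Finset.sum_congr rfl (fun i _ => by rw [hσD σ i, hσΩ σ i])
    rw [Finset.sum_congr rfl (fun σ _ => hfixdiv σ), Finset.sum_const, Finset.card_univ,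
      nsmul_eq_mul, ← hn, ← mul_assoc, inv_mul_cancel₀ hn0, one_mul]
end
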